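/- Let α be a nonempty finite type and let μ be a probability distribution on α × Bool × Bool with coordinate random variables A, X, Y. Assume (i) P(A=a) > 0 for every a ∈ α, (ii) A and Y are conditionally independent given X, (iii) X and Y are not independent, and (iv) P(Y=1|X=1) > P(Y=1|X=0). Then max_a P(Y=1|A=a) > 0, min_a P(Y=1|A=a) < 1, and (P(Y=1) − min_a P(Y=1|A=a)) / (1 − min_a P(Y=1|A=a)) ≤ P(X=1) ≤ P(Y=1) / (max_a P(Y=1|A=a)). (Bounds on the sub-region P(Y=1|X=1) > P(Y=1|X=0), established within the proof of Proposition 3.) -/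
import Mathlib


open Classical in
/-- Probability of an event `E` under a finitely supported distribution `μ`. -/
noncomputable def pr {Ω : Type*} [Fintype Ω] (μ : Ω → ℝ) (E : Ω → Prop) : ℝ :=
  ∑ ω, if E ω then μ ω else 0

/-- Conditional probability `P(E | F) = P(E ∧ F) / P(F)`. -/
noncomputable def cpr {Ω : Type*} [Fintype Ω] (μ : Ω → ℝ) (E F : Ω → Prop) : ℝ :=
  pr μ (fun ω => E ω ∧ F ω) / pr μ F

section aux
variable {Ω : Type*} [Fintype Ω] (μ : Ω → ℝ)

theorem pr_congr {E F : Ω → Prop} (h : ∀ ω, E ω ↔ F ω) : pr μ E = pr μ F := by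
  unfold pr
  refine Finset.sum_congr rfl fun ω _ => ?_
  by_cases hE : E ω
  · rw [if_pos hE, if_pos ((h ω).mp hE)]
  · rw [if_neg hE, if_neg (fun hF => hE ((h ω).mpr hF))]

theorem pr_nonneg (hnn : ∀ ω, 0 ≤ μ ω) (E : Ω → Prop) : 0 ≤ pr μ E := by
  apply Finset.sum_nonneg
  intro ω _
  split
  · exact hnn ω
  · exact le_refl 0

theorem pr_mono (hnn : ∀ ω, 0 ≤ μ ω) {E F : Ω → Prop} (h : ∀ ω, E ω → F ω) :
    pr μ E ≤ pr μ F := by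
  apply Finset.sum_le_sum
  intro ω _
  by_cases hE : E ω
  · simp [hE, h ω hE]
  · simp only [hE, if_false]
    split
    · exact hnn ω
    · rfl

theorem pr_split (E : Ω → Prop) (f : Ω → Bool) :
    pr μ E = pr μ (fun ω => E ω ∧ f ω = false) + pr μ (fun ω => E ω ∧ f ω = true) := by
  unfold pr
  rw [← Finset.sum_add_distrib]
  refine Finset.sum_congr rfl fun ω _ => ?_
  cases hf : f ω <;> by_cases hE : E ω <;> simp [hf, hE]

theorem pr_fiber {α : Type*} [Fintype α] (g : Ω → α) (E : Ω → Prop) :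
    ∑ a, pr μ (fun ω => g ω = a ∧ E ω) = pr μ E := by
  unfold pr
  rw [Finset.sum_comm]
  refine Finset.sum_congr rfl fun ω _ => ?_
  classical
  by_cases hE : E ω
  · simp only [hE, and_true, if_true]
    simp [Finset.sum_ite_eq]
  · simp [hE]

end aux

/-- Bounds on the sub-region `P(Y=1|X=1) > P(Y=1|X=0)`, established within the
proof of Proposition 3. -/
theorem stmt11 {α : Type*} [Fintype α] [Nonempty α]
    (μ : α × Bool × Bool → ℝ)
    (hnn : ∀ ω, 0 ≤ μ ω) (hsum : ∑ ω, μ ω = 1)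
    (hA : ∀ a : α, 0 < pr μ (fun ω => ω.1 = a))
    (hCI : ∀ (a : α) (y x : Bool), 0 < pr μ (fun ω => ω.2.1 = x) →
      cpr μ (fun ω => ω.1 = a ∧ ω.2.2 = y) (fun ω => ω.2.1 = x) =
        cpr μ (fun ω => ω.1 = a) (fun ω => ω.2.1 = x) *
          cpr μ (fun ω => ω.2.2 = y) (fun ω => ω.2.1 = x))
    (hdep : ¬ ∀ x y : Bool,
      pr μ (fun ω => ω.2.1 = x ∧ ω.2.2 = y) =
        pr μ (fun ω => ω.2.1 = x) * pr μ (fun ω => ω.2.2 = y))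
    (hmono : cpr μ (fun ω => ω.2.2 = true) (fun ω => ω.2.1 = false) <
             cpr μ (fun ω => ω.2.2 = true) (fun ω => ω.2.1 = true)) :
    0 < Finset.univ.sup' Finset.univ_nonempty
          (fun a : α => cpr μ (fun ω => ω.2.2 = true) (fun ω => ω.1 = a)) ∧
    Finset.univ.inf' Finset.univ_nonempty
          (fun a : α => cpr μ (fun ω => ω.2.2 = true) (fun ω => ω.1 = a)) < 1 ∧
    (pr μ (fun ω => ω.2.2 = true) -
        Finset.univ.inf' Finset.univ_nonempty
          (fun a : α => cpr μ (fun ω => ω.2.2 = true) (fun ω => ω.1 = a))) /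
      (1 - Finset.univ.inf' Finset.univ_nonempty
          (fun a : α => cpr μ (fun ω => ω.2.2 = true) (fun ω => ω.1 = a))) ≤
      pr μ (fun ω => ω.2.1 = true) ∧
    pr μ (fun ω => ω.2.1 = true) ≤
      pr μ (fun ω => ω.2.2 = true) /
        Finset.univ.sup' Finset.univ_nonempty
          (fun a : α => cpr μ (fun ω => ω.2.2 = true) (fun ω => ω.1 = a)) := by
  classical
  -- total mass
  have hTot : pr μ (fun _ : α × Bool × Bool => True) = 1 := by
    simpa [pr] using hsum
  have hXsum : pr μ (fun ω : α × Bool × Bool => ω.2.1 = false) +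
      pr μ (fun ω : α × Bool × Bool => ω.2.1 = true) = 1 := by
    have h := pr_split μ (fun _ : α × Bool × Bool => True) (fun ω => ω.2.1)
    rw [hTot] at h
    rw [pr_congr μ (E := fun ω : α × Bool × Bool => True ∧ ω.2.1 = false)
          (F := fun ω : α × Bool × Bool => ω.2.1 = false) (fun ω => by simp),
        pr_congr μ (E := fun ω : α × Bool × Bool => True ∧ ω.2.1 = true)
          (F := fun ω : α × Bool × Bool => ω.2.1 = true) (fun ω => by simp)] at h
    linarith
  -- positivity of P(X = x)
  have hX : ∀ x, 0 < pr μ (fun ω : α × Bool × Bool => ω.2.1 = x) := by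
    intro x
    rcases (pr_nonneg μ hnn (fun ω : α × Bool × Bool => ω.2.1 = x)).lt_or_eq with h | h
    · exact h
    exfalso; apply hdep
    have hz : pr μ (fun ω : α × Bool × Bool => ω.2.1 = x) = 0 := h.symm
    have hzy : ∀ y', pr μ (fun ω : α × Bool × Bool => ω.2.1 = x ∧ ω.2.2 = y') = 0 := by
      intro y'
      refine le_antisymm ?_ (pr_nonneg μ hnn _)
      calc pr μ (fun ω : α × Bool × Bool => ω.2.1 = x ∧ ω.2.2 = y')
          ≤ pr μ (fun ω : α × Bool × Bool => ω.2.1 = x) := pr_mono μ hnn (fun ω h => h.1)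
        _ = 0 := hz
    intro x' y
    by_cases hxx : x' = x
    · subst hxx; rw [hzy y, hz, zero_mul]
    · have hx'1 : pr μ (fun ω : α × Bool × Bool => ω.2.1 = x') = 1 := by
        cases x <;> cases x'
        · exact absurd rfl hxx
        · linarith
        · linarith
        · exact absurd rfl hxx
      have hy : pr μ (fun ω : α × Bool × Bool => ω.2.1 = x' ∧ ω.2.2 = y) =
          pr μ (fun ω : α × Bool × Bool => ω.2.2 = y) := by
        have h2 := pr_split μ (fun ω : α × Bool × Bool => ω.2.2 = y) (fun ω => ω.2.1)
        rw [pr_congr μ (E := fun ω : α × Bool × Bool => ω.2.2 = y ∧ ω.2.1 = false)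
              (F := fun ω : α × Bool × Bool => ω.2.1 = false ∧ ω.2.2 = y) (fun ω => and_comm),
            pr_congr μ (E := fun ω : α × Bool × Bool => ω.2.2 = y ∧ ω.2.1 = true)
              (F := fun ω : α × Bool × Bool => ω.2.1 = true ∧ ω.2.2 = y) (fun ω => and_comm)] at h2
        cases x <;> cases x'
        · exact absurd rfl hxx
        · linarith [h2, hzy y]
        · linarith [h2, hzy y]
        · exact absurd rfl hxx
      rw [hy, hx'1, one_mul]
  -- key consequence of conditional independence
  have key : ∀ (x : Bool) (a : α),
      pr μ (fun ω : α × Bool × Bool => (ω.1 = a ∧ ω.2.2 = true) ∧ ω.2.1 = x) =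
      pr μ (fun ω : α × Bool × Bool => ω.1 = a ∧ ω.2.1 = x) *
        cpr μ (fun ω : α × Bool × Bool => ω.2.2 = true) (fun ω => ω.2.1 = x) := by
    intro x a
    have hD : pr μ (fun ω : α × Bool × Bool => ω.2.1 = x) ≠ 0 := (hX x).ne'
    have h := hCI a true x (hX x)
    unfold cpr at h ⊢
    rw [div_eq_iff hD] at h
    rw [h]
    field_simp
  -- decomposition of P(A = a ∧ Y = 1)
  have hAY : ∀ a : α, pr μ (fun ω : α × Bool × Bool => ω.1 = a ∧ ω.2.2 = true) =
      pr μ (fun ω : α × Bool × Bool => ω.1 = a ∧ ω.2.1 = false) *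
        cpr μ (fun ω : α × Bool × Bool => ω.2.2 = true) (fun ω => ω.2.1 = false) +
      pr μ (fun ω : α × Bool × Bool => ω.1 = a ∧ ω.2.1 = true) *
        cpr μ (fun ω : α × Bool × Bool => ω.2.2 = true) (fun ω => ω.2.1 = true) := by
    intro a
    rw [pr_split μ (fun ω : α × Bool × Bool => ω.1 = a ∧ ω.2.2 = true) (fun ω => ω.2.1)]
    rw [key false a, key true a]
  have hA2 : ∀ a : α, pr μ (fun ω : α × Bool × Bool => ω.1 = a) =
      pr μ (fun ω : α × Bool × Bool => ω.1 = a ∧ ω.2.1 = false) +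
      pr μ (fun ω : α × Bool × Bool => ω.1 = a ∧ ω.2.1 = true) := by
    intro a
    exact pr_split μ (fun ω : α × Bool × Bool => ω.1 = a) (fun ω => ω.2.1)
  have hqsum : ∀ x : Bool, ∑ a : α, pr μ (fun ω : α × Bool × Bool => ω.1 = a ∧ ω.2.1 = x) =
      pr μ (fun ω : α × Bool × Bool => ω.2.1 = x) := by
    intro x
    exact pr_fiber μ (fun ω => ω.1) (fun ω : α × Bool × Bool => ω.2.1 = x)
  have hYsum : ∑ a : α, pr μ (fun ω : α × Bool × Bool => ω.1 = a ∧ ω.2.2 = true) =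
      pr μ (fun ω : α × Bool × Bool => ω.2.2 = true) :=
    pr_fiber μ (fun ω => ω.1) (fun ω : α × Bool × Bool => ω.2.2 = true)
  have hPY : pr μ (fun ω : α × Bool × Bool => ω.2.2 = true) =
      pr μ (fun ω : α × Bool × Bool => ω.2.1 = false) *
        cpr μ (fun ω : α × Bool × Bool => ω.2.2 = true) (fun ω => ω.2.1 = false) +
      pr μ (fun ω : α × Bool × Bool => ω.2.1 = true) *
        cpr μ (fun ω : α × Bool × Bool => ω.2.2 = true) (fun ω => ω.2.1 = true) := by
    rw [← hYsum, Finset.sum_congr rfl (fun a _ => hAY a), Finset.sum_add_distrib,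
      ← Finset.sum_mul, ← Finset.sum_mul, hqsum false, hqsum true]
  -- formula for c a
  have hc : ∀ a : α, cpr μ (fun ω : α × Bool × Bool => ω.2.2 = true) (fun ω => ω.1 = a) =
      (pr μ (fun ω : α × Bool × Bool => ω.1 = a ∧ ω.2.1 = false) *
        cpr μ (fun ω : α × Bool × Bool => ω.2.2 = true) (fun ω => ω.2.1 = false) +
       pr μ (fun ω : α × Bool × Bool => ω.1 = a ∧ ω.2.1 = true) *
        cpr μ (fun ω : α × Bool × Bool => ω.2.2 = true) (fun ω => ω.2.1 = true)) /
      (pr μ (fun ω : α × Bool × Bool => ω.1 = a ∧ ω.2.1 = false) +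
       pr μ (fun ω : α × Bool × Bool => ω.1 = a ∧ ω.2.1 = true)) := by
    intro a
    conv_lhs => unfold cpr
    rw [pr_congr μ (E := fun ω : α × Bool × Bool => ω.2.2 = true ∧ ω.1 = a)
          (F := fun ω : α × Bool × Bool => ω.1 = a ∧ ω.2.2 = true) (fun ω => and_comm),
        hAY a, ← hA2 a]
  -- scalar abbreviations
  have hp0nn : 0 ≤ cpr μ (fun ω : α × Bool × Bool => ω.2.2 = true) (fun ω => ω.2.1 = false) :=
    div_nonneg (pr_nonneg μ hnn _) (pr_nonneg μ hnn _)
  have hp1le : cpr μ (fun ω : α × Bool × Bool => ω.2.2 = true) (fun ω => ω.2.1 = true) ≤ 1 := by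
    unfold cpr
    exact (div_le_one (hX true)).mpr (pr_mono μ hnn (fun ω h => h.2))
  set p0 := cpr μ (fun ω : α × Bool × Bool => ω.2.2 = true) (fun ω => ω.2.1 = false) with hp0def
  set p1 := cpr μ (fun ω : α × Bool × Bool => ω.2.2 = true) (fun ω => ω.2.1 = true) with hp1def
  set t' := pr μ (fun ω : α × Bool × Bool => ω.2.1 = false) with ht'def
  set t := pr μ (fun ω : α × Bool × Bool => ω.2.1 = true) with htdef
  set PY := pr μ (fun ω : α × Bool × Bool => ω.2.2 = true) with hPYdef
  set q0 : α → ℝ := fun a => pr μ (fun ω : α × Bool × Bool => ω.1 = a ∧ ω.2.1 = false) with hq0def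
  set q1 : α → ℝ := fun a => pr μ (fun ω : α × Bool × Bool => ω.1 = a ∧ ω.2.1 = true) with hq1def
  set c : α → ℝ := fun a => cpr μ (fun ω : α × Bool × Bool => ω.2.2 = true) (fun ω => ω.1 = a)
    with hcdef
  have hp1pos : 0 < p1 := lt_of_le_of_lt hp0nn hmono
  have hp0lt1 : p0 < 1 := lt_of_lt_of_le hmono hp1le
  have hq0nn : ∀ a, 0 ≤ q0 a := fun a => pr_nonneg μ hnn _
  have hq1nn : ∀ a, 0 ≤ q1 a := fun a => pr_nonneg μ hnn _
  have hqpos : ∀ a, 0 < q0 a + q1 a := by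
    intro a
    rw [← hA2 a]
    exact hA a
  have ht'pos : 0 < t' := hX false
  have htpos : 0 < t := hX true
  -- per-a bounds
  have hcle : ∀ a, c a ≤ p1 := by
    intro a
    rw [hcdef]
    simp only []
    rw [hc a, div_le_iff₀ (hqpos a)]
    nlinarith [mul_nonneg (hq0nn a) (sub_nonneg.mpr hmono.le)]
  have hcge : ∀ a, p0 ≤ c a := by
    intro a
    rw [hcdef]
    simp only []
    rw [hc a, le_div_iff₀ (hqpos a)]
    nlinarith [mul_nonneg (hq1nn a) (sub_nonneg.mpr hmono.le)]
  -- existence of witnesses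
  obtain ⟨a₀, -, ha₀⟩ : ∃ a ∈ Finset.univ, (0:ℝ) < q1 a := by
    apply Finset.exists_lt_of_sum_lt
    rw [hqsum true]
    simpa using htpos
  obtain ⟨a₁, -, ha₁⟩ : ∃ a ∈ Finset.univ, (0:ℝ) < q0 a := by
    apply Finset.exists_lt_of_sum_lt
    rw [hqsum false]
    simpa using ht'pos
  have hc0pos : 0 < c a₀ := by
    rw [hcdef]
    simp only []
    rw [hc a₀]
    exact div_pos (add_pos_of_nonneg_of_pos (mul_nonneg (hq0nn a₀) hp0nn)
      (mul_pos ha₀ hp1pos)) (hqpos a₀)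
  have hc1lt : c a₁ < 1 := by
    rw [hcdef]
    simp only []
    rw [hc a₁, div_lt_one (hqpos a₁)]
    nlinarith [mul_le_of_le_one_right (hq1nn a₁) hp1le]
  have hsuppos : 0 < Finset.univ.sup' Finset.univ_nonempty c :=
    lt_of_lt_of_le hc0pos (Finset.le_sup' c (Finset.mem_univ a₀))
  have hinflt : Finset.univ.inf' Finset.univ_nonempty c < 1 :=
    lt_of_le_of_lt (Finset.inf'_le c (Finset.mem_univ a₁)) hc1lt
  have hsup_le : Finset.univ.sup' Finset.univ_nonempty c ≤ p1 :=
    Finset.sup'_le _ _ (fun a _ => hcle a)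
  have hinf_ge : p0 ≤ Finset.univ.inf' Finset.univ_nonempty c :=
    Finset.le_inf' _ _ (fun a _ => hcge a)
  refine ⟨hsuppos, hinflt, ?_, ?_⟩
  · rw [div_le_iff₀ (by linarith : (0:ℝ) < 1 - Finset.univ.inf' Finset.univ_nonempty c)]
    nlinarith [mul_le_mul_of_nonneg_left hinf_ge ht'pos.le,
      mul_le_mul_of_nonneg_left hp1le htpos.le]
  · rw [le_div_iff₀ hsuppos]
    nlinarith [mul_le_mul_of_nonneg_left hsup_le htpos.le,
      mul_nonneg ht'pos.le hp0nn]
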